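/- Let g : [0,∞) → [0,∞) be bounded, non-increasing and integrable. Then for every signed Borel measure ν on [0,∞) one has |∫₀^∞ g dν| ≤ C · sup_{x ≥ 0} |ν|([x, x+1]), with C := g(0) + ∫₀^∞ g. -/

import Mathlib

open MeasureTheory Set Filter
open scoped ENNReal Topology

/-! Cover `[0,∞)` by the unit intervals `[n, n+1]`. On the `n`-th one `|g| ≤ g n` by monotonicity,
so `∫ |g| d(P+N) ≤ ∑ₙ g n · (P+N)[n, n+1] ≤ (∑ₙ g n) · sup_x (P+N)[x, x+1]`, and comparing the
sum of the antitone `g` with its integral gives `∑ₙ g n ≤ g 0 + ∫₀^∞ g`. -/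

theorem AntitoneOn.sum_range_succ_le_setIntegral_Ioi {g : ℝ → ℝ}
    (hg0 : ∀ x ∈ Ioi (0 : ℝ), 0 ≤ g x) (hgmono : AntitoneOn g (Ici 0))
    (hgint : IntegrableOn g (Ioi 0)) (n : ℕ) :
    ∑ i ∈ Finset.range n, g (i + 1) ≤ ∫ x in Ioi 0, g x := by
  have hsum := (hgmono.mono (Icc_subset_Ici_self : Icc (0 : ℝ) (0 + n) ⊆ Ici 0)).sum_le_integral
  simp only [zero_add, Nat.cast_add, Nat.cast_one] at hsum
  calc ∑ i ∈ Finset.range n, g (i + 1)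
      ≤ ∫ x in Ioc 0 (n : ℝ), g x := by
        rwa [← intervalIntegral.integral_of_le n.cast_nonneg]
    _ ≤ ∫ x in Ioi 0, g x :=
        setIntegral_mono_set hgint (ae_restrict_of_forall_mem measurableSet_Ioi hg0)
          Ioc_subset_Ioi_self.eventuallyLE

theorem AntitoneOn.tsum_ofReal_nat_le_add_setIntegral_Ioi {g : ℝ → ℝ}
    (hg0 : ∀ x ∈ Ici (0 : ℝ), 0 ≤ g x) (hgmono : AntitoneOn g (Ici 0))
    (hgint : IntegrableOn g (Ioi 0)) :
    ∑' n : ℕ, ENNReal.ofReal (g n) ≤ ENNReal.ofReal (g 0 + ∫ x in Ioi 0, g x) := by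
  have hg0' : ∀ x ∈ Ioi (0 : ℝ), 0 ≤ g x := fun x hx => hg0 x (Ioi_subset_Ici_self hx)
  refine ENNReal.tsum_le_of_sum_range_le fun n => ?_
  rw [← ENNReal.ofReal_sum_of_nonneg fun (i : ℕ) _ => hg0 i (mem_Ici.2 i.cast_nonneg)]
  refine ENNReal.ofReal_le_ofReal ?_
  have hg00 : 0 ≤ g 0 := hg0 0 self_mem_Ici
  cases n with
  | zero => simpa using add_nonneg hg00 (setIntegral_nonneg measurableSet_Ioi hg0')
  | succ n =>
    rw [Finset.sum_range_succ']
    have := hgmono.sum_range_succ_le_setIntegral_Ioi hg0' hgint n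
    push_cast
    linarith

theorem AntitoneOn.setLIntegral_Ici_enorm_le_tsum_mul_iSup_Icc {g : ℝ → ℝ}
    (hg0 : ∀ x ∈ Ici (0 : ℝ), 0 ≤ g x) (hgmono : AntitoneOn g (Ici 0)) (μ : Measure ℝ) :
    ∫⁻ x in Ici 0, ‖g x‖ₑ ∂μ ≤
      (∑' n : ℕ, ENNReal.ofReal (g n)) * ⨆ x ∈ Ici (0 : ℝ), μ (Icc x (x + 1)) := by
  have hcover : Ici (0 : ℝ) ⊆ ⋃ n : ℕ, Icc (n : ℝ) (n + 1) := fun x hx =>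
    mem_iUnion.2 ⟨⌊x⌋₊, Nat.floor_le hx, (Nat.lt_floor_add_one x).le⟩
  have hpiece (n : ℕ) : ∫⁻ x in Icc (n : ℝ) (n + 1), ‖g x‖ₑ ∂μ ≤
      ENNReal.ofReal (g n) * ⨆ x ∈ Ici (0 : ℝ), μ (Icc x (x + 1)) := by
    calc ∫⁻ x in Icc (n : ℝ) (n + 1), ‖g x‖ₑ ∂μ
        ≤ ∫⁻ _ in Icc (n : ℝ) (n + 1), ENNReal.ofReal (g n) ∂μ := by
          refine setLIntegral_mono' measurableSet_Icc fun x hx => ?_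
          have hx0 : x ∈ Ici (0 : ℝ) := n.cast_nonneg.trans hx.1
          rw [Real.enorm_eq_ofReal (hg0 x hx0)]
          exact ENNReal.ofReal_le_ofReal (hgmono (mem_Ici.2 n.cast_nonneg) hx0 hx.1)
      _ = ENNReal.ofReal (g n) * μ (Icc (n : ℝ) (n + 1)) := setLIntegral_const _ _
      _ ≤ _ := by
          gcongr
          exact le_iSup₂ (f := fun x (_ : x ∈ Ici (0 : ℝ)) => μ (Icc x (x + 1))) _ (mem_Ici.2 n.cast_nonneg)
  calc ∫⁻ x in Ici 0, ‖g x‖ₑ ∂μ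
      ≤ ∫⁻ x in ⋃ n : ℕ, Icc (n : ℝ) (n + 1), ‖g x‖ₑ ∂μ := lintegral_mono_set hcover
    _ ≤ ∑' n : ℕ, ∫⁻ x in Icc (n : ℝ) (n + 1), ‖g x‖ₑ ∂μ := lintegral_iUnion_le _ _
    _ ≤ _ := (ENNReal.tsum_le_tsum hpiece).trans_eq ENNReal.tsum_mul_right

theorem stmt13 (g : ℝ → ℝ) (hg0 : ∀ x ∈ Ici (0 : ℝ), 0 ≤ g x)
    (hgmono : AntitoneOn g (Ici (0 : ℝ)))
    (hgint : IntegrableOn g (Ioi (0 : ℝ))) :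
    ∀ P N : Measure ℝ, P (Iio (0 : ℝ)) = 0 → N (Iio (0 : ℝ)) = 0 →
      ENNReal.ofReal |(∫ x, g x ∂P) - ∫ x, g x ∂N| ≤
        ENNReal.ofReal (g 0 + ∫ x in Ioi (0 : ℝ), g x) *
          ⨆ x ∈ Ici (0 : ℝ), (P (Icc x (x + 1)) + N (Icc x (x + 1))) := by
  intro P N hP hN
  have hsupp : (P + N).restrict (Ici 0) = P + N := by
    refine Measure.restrict_eq_self_of_ae_mem (mem_ae_iff.2 (?_ : (P + N) (Ici 0)ᶜ = 0))
    rw [compl_Ici, Measure.add_apply, hP, hN, add_zero]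
  calc ENNReal.ofReal |(∫ x, g x ∂P) - ∫ x, g x ∂N|
      ≤ ‖∫ x, g x ∂P‖ₑ + ‖∫ x, g x ∂N‖ₑ := by
        simpa only [Real.enorm_eq_ofReal_abs] using enorm_sub_le (a := ∫ x, g x ∂P)
    _ ≤ ∫⁻ x, ‖g x‖ₑ ∂P + ∫⁻ x, ‖g x‖ₑ ∂N := by
        gcongr <;> exact enorm_integral_le_lintegral_enorm _
    _ = ∫⁻ x in Ici 0, ‖g x‖ₑ ∂(P + N) := by rw [hsupp, lintegral_add_measure]
    _ ≤ (∑' n : ℕ, ENNReal.ofReal (g n)) * ⨆ x ∈ Ici (0 : ℝ), (P + N) (Icc x (x + 1)) :=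
        hgmono.setLIntegral_Ici_enorm_le_tsum_mul_iSup_Icc hg0 _
    _ ≤ _ := by
        simp only [Measure.add_apply]
        gcongr
        exact hgmono.tsum_ofReal_nat_le_add_setIntegral_Ioi hg0 hgint
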